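/- Let A be a probability distribution on ℝ and let m', γ > 0. Suppose every monomial x^i with 1 ≤ i ≤ r satisfies |E_{x~A}[x^i] − E_{x~N(0,1)}[x^i]| ≤ 2^{-Cr}γ for a sufficiently large constant C. Then every polynomial g of degree at most r with E_{x~N(0,1)}[g(x)²] = 1 satisfies |E_{x~A}[g(x)] − E_{x~N(0,1)}[g(x)]| ≤ γ. -/

import Mathlib

/-!
Expand `g` in the probabilists' Hermite polynomials, `g = ∑ dᵢ Heᵢ`. Stein's identity
`E[X p] = E[p']` gives `E[p Heₙ] = E[p⁽ⁿ⁾]`, hence orthogonality with `E[Heₙ²] = n!` and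
`E[g²] = ∑ dᵢ² i! = 1`. The explicit formula for the Hermite coefficients gives
`(coeff Heᵢ j)² ≤ 4ⁱ i!`, so every coefficient of `g` is at most `∑ᵢ 2ⁱ < 2^(r+1)` in absolute
value.
Expanding `g` in monomials, its expectation gap is at most `r · 2^(r+1)` times the largest
monomial gap, and `C = 2` absorbs that factor.
-/

open MeasureTheory ProbabilityTheory Polynomial Finset
open scoped Nat NNReal

lemma Nat.doubleFactorial_le_doubleFactorial_succ : ∀ n : ℕ, n‼ ≤ (n + 1)‼
  | 0 => le_rfl
  | 1 => by decide
  | n + 2 => by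
    rw [Nat.doubleFactorial_add_two, Nat.doubleFactorial_add_two (n + 1)]
    exact Nat.mul_le_mul (by omega) (doubleFactorial_le_doubleFactorial_succ n)

lemma Nat.doubleFactorial_sub_one_sq_le_factorial : ∀ n : ℕ, (n - 1)‼ ^ 2 ≤ n !
  | 0 => le_rfl
  | n + 1 => by
    rw [Nat.add_sub_cancel, sq, Nat.factorial_eq_mul_doubleFactorial]
    exact Nat.mul_le_mul_right _ (doubleFactorial_le_doubleFactorial_succ n)

lemma Nat.two_mul_le_two_pow : ∀ n : ℕ, 2 * n ≤ 2 ^ n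
  | 0 => Nat.zero_le 1
  | n + 1 => by rw [pow_succ]; have := n.lt_two_pow_self; omega

lemma Polynomial.sq_coeff_hermite_le (n k : ℕ) : (hermite n).coeff k ^ 2 ≤ 4 ^ n * n ! := by
  rw [coeff_hermite]
  split_ifs
  · have hdf : ((n - k - 1)‼ : ℤ) ^ 2 ≤ n ! := by
      exact_mod_cast (Nat.doubleFactorial_sub_one_sq_le_factorial (n - k)).trans
        (Nat.factorial_le (Nat.sub_le n k))
    have hchoose : ((n.choose k : ℕ) : ℤ) ^ 2 ≤ 4 ^ n := by
      rw [show (4 : ℤ) ^ n = (2 ^ n) ^ 2 by rw [← pow_mul, mul_comm, pow_mul]; norm_num]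
      exact pow_le_pow_left₀ (by positivity) (by exact_mod_cast Nat.choose_le_two_pow n k) 2
    rw [mul_pow, mul_pow, ← pow_mul, mul_comm _ 2, pow_mul, neg_one_sq, one_pow, one_mul,
      mul_comm]
    exact mul_le_mul hchoose hdf (by positivity) (by positivity)
  · positivity

lemma Polynomial.exists_eq_sum_C_mul_of_monic {R : Type*} [Ring R] {P : ℕ → R[X]}
    (hmonic : ∀ i, (P i).Monic) (hdeg : ∀ i, (P i).natDegree = i) {r : ℕ} {p : R[X]}
    (hp : p.natDegree ≤ r) : ∃ d : ℕ → R, p = ∑ i ∈ range (r + 1), C (d i) * P i := by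
  induction r generalizing p with
  | zero =>
    refine ⟨fun _ => p.coeff 0, ?_⟩
    rw [sum_range_one, (hmonic 0).natDegree_eq_zero.mp (hdeg 0), mul_one,
      ← eq_C_of_natDegree_le_zero hp]
  | succ r ih =>
    have hlower : (p - C (p.coeff (r + 1)) * P (r + 1)).natDegree ≤ r := by
      refine natDegree_le_iff_coeff_eq_zero.mpr fun j hj => ?_
      rw [coeff_sub, coeff_C_mul]
      rcases (Nat.succ_le_of_lt hj).eq_or_lt with rfl | hlt
      · have hlead := (hmonic (r + 1)).coeff_natDegree
        rw [hdeg] at hlead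
        rw [hlead, mul_one, sub_self]
      · rw [coeff_eq_zero_of_natDegree_lt (hp.trans_lt hlt),
          coeff_eq_zero_of_natDegree_lt ((hdeg _).trans_lt hlt), mul_zero, sub_zero]
    obtain ⟨d, hd⟩ := ih hlower
    refine ⟨Function.update d (r + 1) (p.coeff (r + 1)), ?_⟩
    rw [sum_range_succ, Function.update_self,
      sum_congr rfl fun i hi => by rw [Function.update_of_ne (by simp at hi; omega)], ← hd,
      sub_add_cancel]

section Moments

variable {μ : Measure ℝ} {r : ℕ} {p : ℝ[X]}

lemma integrable_eval_of_integrable_pow (hp : p.natDegree ≤ r)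
    (h : ∀ i ≤ r, Integrable (fun x => x ^ i) μ) : Integrable (fun x => p.eval x) μ := by
  simp_rw [eval_eq_sum_range' (Nat.lt_succ_of_le hp)]
  exact integrable_finsetSum _ fun i hi => (h i (Nat.lt_succ_iff.mp (mem_range.mp hi))).const_mul _

lemma integral_eval_eq_sum_coeff_mul_moment (hp : p.natDegree ≤ r)
    (h : ∀ i ≤ r, Integrable (fun x => x ^ i) μ) :
    ∫ x, p.eval x ∂μ = ∑ i ∈ range (r + 1), p.coeff i * ∫ x, x ^ i ∂μ := by
  simp_rw [eval_eq_sum_range' (Nat.lt_succ_of_le hp)]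
  rw [integral_finsetSum _ fun i hi => (h i (Nat.lt_succ_iff.mp (mem_range.mp hi))).const_mul _]
  simp_rw [integral_const_mul]

lemma abs_integral_eval_sub_integral_eval_le {ν : Measure ℝ} [IsProbabilityMeasure μ]
    [IsProbabilityMeasure ν] {ε B : ℝ} (hp : p.natDegree ≤ r)
    (hμ : ∀ i ≤ r, Integrable (fun x => x ^ i) μ) (hν : ∀ i ≤ r, Integrable (fun x => x ^ i) ν)
    (hmom : ∀ i, 1 ≤ i → i ≤ r → |(∫ x, x ^ i ∂μ) - ∫ x, x ^ i ∂ν| ≤ ε)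
    (hcoeff : ∀ i, |p.coeff i| ≤ B) :
    |(∫ x, p.eval x ∂μ) - ∫ x, p.eval x ∂ν| ≤ r * (B * ε) := by
  rw [integral_eval_eq_sum_coeff_mul_moment hp hμ, integral_eval_eq_sum_coeff_mul_moment hp hν,
    ← sum_sub_distrib, sum_range_succ']
  simp only [pow_zero, integral_const, probReal_univ, smul_eq_mul, mul_one, sub_self, add_zero,
    ← mul_sub]
  calc |∑ i ∈ range r, p.coeff (i + 1) * ((∫ x, x ^ (i + 1) ∂μ) - ∫ x, x ^ (i + 1) ∂ν)|
      ≤ ∑ i ∈ range r, |p.coeff (i + 1) * ((∫ x, x ^ (i + 1) ∂μ) - ∫ x, x ^ (i + 1) ∂ν)| :=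
        abs_sum_le_sum_abs _ _
    _ ≤ ∑ _i ∈ range r, B * ε := sum_le_sum fun i hi => by
        rw [abs_mul]
        exact mul_le_mul (hcoeff _) (hmom _ (by omega) (by simp at hi; omega)) (abs_nonneg _)
          ((abs_nonneg _).trans (hcoeff 0))
    _ = r * (B * ε) := by simp

end Moments

section Gaussian

variable {μ : ℝ} {v : ℝ≥0}

lemma integrable_pow_gaussianReal (n : ℕ) : Integrable (fun x => x ^ n) (gaussianReal μ v) := by
  refine ((memLp_id_gaussianReal n).integrable_norm_pow' (p := n)).mono' ?_ ?_
  · fun_prop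
  · exact .of_forall fun x => by simp

lemma integrable_eval_gaussianReal (p : ℝ[X]) :
    Integrable (fun x => p.eval x) (gaussianReal μ v) :=
  integrable_eval_of_integrable_pow le_rfl fun i _ => integrable_pow_gaussianReal i

lemma integrable_gaussianReal_iff (hv : v ≠ 0) {f : ℝ → ℝ} :
    Integrable f (gaussianReal μ v) ↔ Integrable (fun x => gaussianPDFReal μ v x * f x) := by
  rw [gaussianReal_of_var_ne_zero _ hv,
    integrable_withDensity_iff_integrable_smul' (measurable_gaussianPDF μ v)
      (.of_forall fun _ => gaussianPDF_lt_top)]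
  simp_rw [toReal_gaussianPDF, smul_eq_mul]

lemma hasDerivAt_gaussianPDFReal (x : ℝ) :
    HasDerivAt (gaussianPDFReal μ v) (-((x - μ) / v) * gaussianPDFReal μ v x) x := by
  have hexp : HasDerivAt (fun y => -(y - μ) ^ 2 / (2 * v)) (-((x - μ) / v)) x :=
    ((((hasDerivAt_id x).sub_const μ).pow 2).neg.div_const (2 * (v : ℝ))).congr_deriv
      (by simp only [id, Nat.cast_ofNat]; ring)
  rw [gaussianPDFReal_def]
  exact (hexp.exp.const_mul (√(2 * Real.pi * v))⁻¹).congr_deriv (by ring)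

end Gaussian

noncomputable def gaussianExpectation : ℝ[X] →ₗ[ℝ] ℝ where
  toFun p := ∫ x, p.eval x ∂gaussianReal 0 1
  map_add' p q := by
    simp only [eval_add]
    exact integral_add (integrable_eval_gaussianReal p) (integrable_eval_gaussianReal q)
  map_smul' a p := by
    simp only [eval_smul, smul_eq_mul, RingHom.id_apply]
    exact integral_const_mul a _

lemma gaussianExpectation_apply (p : ℝ[X]) :
    gaussianExpectation p = ∫ x, p.eval x ∂gaussianReal 0 1 := rfl

lemma integrable_gaussianPDFReal_mul_eval (p : ℝ[X]) :
    Integrable (fun x => gaussianPDFReal 0 1 x * p.eval x) :=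
  (integrable_gaussianReal_iff one_ne_zero).mp (integrable_eval_gaussianReal p)

/-- Stein's identity: integrate by parts against `φ' = -x φ`. -/
lemma gaussianExpectation_X_mul (p : ℝ[X]) :
    gaussianExpectation (X * p) = gaussianExpectation (derivative p) := by
  have hparts := integral_mul_deriv_eq_deriv_mul_of_integrable (u := fun x => p.eval x)
    (v := gaussianPDFReal 0 1) (u' := fun x => (derivative p).eval x)
    (v' := fun x => -x * gaussianPDFReal 0 1 x)
    (fun x _ => p.hasDerivAt x)
    (fun x _ => by simpa using hasDerivAt_gaussianPDFReal (μ := 0) (v := 1) x)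
    ((integrable_gaussianPDFReal_mul_eval (-(X * p))).congr (.of_forall fun x => by simp; ring))
    ((integrable_gaussianPDFReal_mul_eval (derivative p)).congr (.of_forall fun x => by simp; ring))
    ((integrable_gaussianPDFReal_mul_eval p).congr (.of_forall fun x => by simp; ring))
  simp only [gaussianExpectation_apply, integral_gaussianReal_eq_integral_smul one_ne_zero,
    smul_eq_mul, eval_mul, eval_X]
  calc ∫ x, gaussianPDFReal 0 1 x * (x * p.eval x)
      = -∫ x, p.eval x * (-x * gaussianPDFReal 0 1 x) := by
        rw [← integral_neg]; congr 1 with x; ring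
    _ = ∫ x, gaussianPDFReal 0 1 x * (derivative p).eval x := by
        rw [hparts, neg_neg]; congr 1 with x; ring

lemma gaussianExpectation_C (a : ℝ) : gaussianExpectation (C a) = a := by
  simp [gaussianExpectation_apply]

noncomputable def hermiteReal (n : ℕ) : ℝ[X] := (hermite n).map (Int.castRingHom ℝ)

lemma hermiteReal_zero : hermiteReal 0 = 1 := by simp [hermiteReal]

lemma hermiteReal_succ (n : ℕ) :
    hermiteReal (n + 1) = X * hermiteReal n - derivative (hermiteReal n) := by
  simp only [hermiteReal, hermite_succ, Polynomial.map_sub, Polynomial.map_mul, Polynomial.map_X,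
    derivative_map]

lemma hermiteReal_monic (n : ℕ) : (hermiteReal n).Monic := (hermite_monic n).map _

lemma natDegree_hermiteReal (n : ℕ) : (hermiteReal n).natDegree = n := by
  rw [hermiteReal, (hermite_monic n).natDegree_map, natDegree_hermite]

lemma coeff_hermiteReal (n k : ℕ) : (hermiteReal n).coeff k = (hermite n).coeff k := by
  simp [hermiteReal]

lemma gaussianExpectation_mul_hermiteReal (n : ℕ) (p : ℝ[X]) :
    gaussianExpectation (p * hermiteReal n) = gaussianExpectation (derivative^[n] p) := by
  induction n generalizing p with
  | zero => rw [hermiteReal_zero, mul_one, Function.iterate_zero_apply]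
  | succ n ih =>
    have hstein := gaussianExpectation_X_mul (p * hermiteReal n)
    rw [derivative_mul, map_add, ih] at hstein
    rw [hermiteReal_succ, mul_sub, map_sub, ← mul_left_comm, hstein, add_sub_cancel_right,
      Function.iterate_succ_apply]

lemma gaussianExpectation_hermiteReal_mul_hermiteReal (m n : ℕ) :
    gaussianExpectation (hermiteReal m * hermiteReal n) = if m = n then (n ! : ℝ) else 0 := by
  split_ifs with h
  · subst h
    have hconst : (derivative^[m] (hermiteReal m)).natDegree ≤ 0 :=
      (natDegree_iterate_derivative _ m).trans (by rw [natDegree_hermiteReal, Nat.sub_self])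
    rw [gaussianExpectation_mul_hermiteReal, eq_C_of_natDegree_le_zero hconst,
      gaussianExpectation_C, coeff_iterate_derivative, zero_add, Nat.descFactorial_self,
      coeff_hermiteReal, coeff_hermite_self, Int.cast_one, nsmul_one]
  · have hvanish {k l : ℕ} (hkl : k < l) : derivative^[l] (hermiteReal k) = 0 :=
      iterate_derivative_eq_zero ((natDegree_hermiteReal k).trans_lt hkl)
    rcases Nat.lt_or_gt_of_ne h with hlt | hgt
    · rw [gaussianExpectation_mul_hermiteReal, hvanish hlt, map_zero]
    · rw [mul_comm, gaussianExpectation_mul_hermiteReal, hvanish hgt, map_zero]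

lemma gaussianExpectation_sum_hermiteReal_sq (s : Finset ℕ) (d : ℕ → ℝ) :
    gaussianExpectation ((∑ i ∈ s, C (d i) * hermiteReal i) ^ 2) = ∑ i ∈ s, d i ^ 2 * i ! := by
  have hterm (i j : ℕ) : gaussianExpectation (C (d i) * hermiteReal i * (C (d j) * hermiteReal j))
      = d i * d j * if i = j then (j ! : ℝ) else 0 := by
    rw [show C (d i) * hermiteReal i * (C (d j) * hermiteReal j)
      = (d i * d j) • (hermiteReal i * hermiteReal j) by rw [smul_eq_C_mul, C_mul]; ring,
      map_smul, gaussianExpectation_hermiteReal_mul_hermiteReal, smul_eq_mul]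
  simp_rw [sq, sum_mul_sum, map_sum, hterm, mul_ite, mul_zero, sum_ite_eq]
  exact sum_congr rfl fun i hi => if_pos hi

lemma abs_coeff_le_of_gaussianExpectation_sq_eq_one {g : ℝ[X]} {r : ℕ} (hg : g.natDegree ≤ r)
    (hnorm : gaussianExpectation (g ^ 2) = 1) (j : ℕ) : |g.coeff j| ≤ 2 ^ (r + 1) := by
  obtain ⟨d, rfl⟩ := exists_eq_sum_C_mul_of_monic hermiteReal_monic natDegree_hermiteReal hg
  rw [gaussianExpectation_sum_hermiteReal_sq] at hnorm
  have hterm (i : ℕ) (hi : i ∈ range (r + 1)) : |d i * (hermiteReal i).coeff j| ≤ 2 ^ i := by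
    have hdi : d i ^ 2 * i ! ≤ 1 :=
      hnorm ▸ single_le_sum (f := fun k => d k ^ 2 * k !) (fun k _ => by positivity) hi
    have hcoeff : (hermiteReal i).coeff j ^ 2 ≤ 4 ^ i * i ! := by
      rw [coeff_hermiteReal]; exact_mod_cast sq_coeff_hermite_le i j
    refine abs_le_of_sq_le_sq ?_ (by positivity)
    calc (d i * (hermiteReal i).coeff j) ^ 2 ≤ d i ^ 2 * (4 ^ i * i !) := by
          rw [mul_pow]; exact mul_le_mul_of_nonneg_left hcoeff (sq_nonneg _)
      _ = 4 ^ i * (d i ^ 2 * i !) := by ring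
      _ ≤ 4 ^ i := mul_le_of_le_one_right (by positivity) hdi
      _ = (2 ^ i) ^ 2 := by rw [← pow_mul, mul_comm, pow_mul]; norm_num
  simp only [finsetSum_coeff, coeff_C_mul]
  calc |∑ i ∈ range (r + 1), d i * (hermiteReal i).coeff j|
      ≤ ∑ i ∈ range (r + 1), |d i * (hermiteReal i).coeff j| := abs_sum_le_sum_abs _ _
    _ ≤ ∑ i ∈ range (r + 1), (2 : ℝ) ^ i := sum_le_sum hterm
    _ ≤ 2 ^ (r + 1) := by
        rw [geom_sum_eq (by norm_num : (2 : ℝ) ≠ 1)]; norm_num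

/-- If all monomials up to degree `r` have expectations under `A` within `2^{-Cr}γ` of the
Gaussian ones (for sufficiently large `C`), then every unit-norm degree-`≤ r` polynomial
has expectation gap at most `γ`. -/
theorem monomial_matching_implies_polynomial_matching :
    ∃ C : ℝ, 0 < C ∧ ∀ (A : Measure ℝ), IsProbabilityMeasure A →
      ∀ (r : ℕ) (γ : ℝ), 0 < γ →
      (∀ i : ℕ, i ≤ r → Integrable (fun x => x ^ i) A) →
      (∀ i : ℕ, 1 ≤ i → i ≤ r →
        |(∫ x, x ^ i ∂A) - ∫ x, x ^ i ∂(gaussianReal 0 1)| ≤ 2 ^ (-(C * r)) * γ) →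
      ∀ g : Polynomial ℝ, g.natDegree ≤ r →
        (∫ x, (g.eval x) ^ 2 ∂(gaussianReal 0 1)) = 1 →
        |(∫ x, g.eval x ∂A) - ∫ x, g.eval x ∂(gaussianReal 0 1)| ≤ γ := by
  refine ⟨2, two_pos, fun A _ r γ hγ hint hmom g hg hnorm => ?_⟩
  have hcoeff := abs_coeff_le_of_gaussianExpectation_sq_eq_one hg
    (by rw [gaussianExpectation_apply, ← hnorm]; simp_rw [eval_pow])
  have hgap := abs_integral_eval_sub_integral_eval_le hg hint
    (fun i _ => integrable_pow_gaussianReal i) hmom hcoeff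
  have hscale : (2 : ℝ) ^ (-(2 * (r : ℝ))) = ((4 : ℝ) ^ r)⁻¹ := by
    rw [Real.rpow_neg zero_le_two, Real.rpow_mul zero_le_two]; norm_num
  have hcount : (r : ℝ) * 2 ^ (r + 1) ≤ 4 ^ r := by
    have h2r : (2 * r : ℝ) ≤ 2 ^ r := by exact_mod_cast Nat.two_mul_le_two_pow r
    calc (r : ℝ) * 2 ^ (r + 1) = 2 * r * 2 ^ r := by ring
      _ ≤ 2 ^ r * 2 ^ r := mul_le_mul_of_nonneg_right h2r (by positivity)
      _ = 4 ^ r := by rw [← mul_pow]; norm_num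
  calc _ ≤ r * (2 ^ (r + 1) * (2 ^ (-(2 * (r : ℝ))) * γ)) := hgap
    _ = (r * 2 ^ (r + 1)) / 4 ^ r * γ := by rw [hscale]; ring
    _ ≤ γ := mul_le_of_le_one_left hγ.le ((div_le_one (by positivity)).mpr hcount)
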